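/- arXiv:1007.2316 — 3 statements merged into one kernel-verified Lean document; each statement's English description precedes it below -/
import Mathlib

section
/- The solution of the power-control system is monotone in the SIR targets: if p = D·G·p + n·D·𝟙 and p' = D'·G·p' + n·D'·𝟙 both have nonnegative solutions, where D' ≥ D entrywise (diagonal matrices with positive entries), and the spectral radius of D'·G is < 1, then p' ≥ p entrywise. -/
/-!
Put `A := D'G` and `q := p' - p`. Subtracting the two fixed-point equations gives
`q - A q = (D' - D)(G p + n 𝟙) ≥ 0`, i.e. `A q ≤ q`. As `A` is entrywise nonnegative it is
monotone, so `A ^ m q ≤ q` for every `m`; and `A ^ m → 0` by Gelfand's formula, since the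
spectral radius of `A` is `< 1`. Letting `m → ∞` gives `0 ≤ q`.
-/

open Matrix Filter Topology

theorem tendsto_pow_atTop_nhds_zero_of_spectralRadius_lt_one {A : Type*} [NormedRing A]
    [NormedAlgebra ℂ A] [CompleteSpace A] {a : A} (ha : spectralRadius ℂ a < 1) :
    Tendsto (a ^ ·) atTop (𝓝 0) := by
  obtain ⟨r, hρr, hr1⟩ := ENNReal.lt_iff_exists_nnreal_btwn.mp ha
  have hgelfand := spectrum.pow_nnnorm_pow_one_div_tendsto_nhds_spectralRadius a
  have hpow : ∀ᶠ m : ℕ in atTop, ‖a ^ m‖₊ ≤ r ^ m := by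
    filter_upwards [hgelfand.eventually_lt_const hρr, eventually_gt_atTop 0] with m hm hm0
    rw [one_div, ENNReal.rpow_inv_lt_iff (by positivity), ENNReal.rpow_natCast] at hm
    exact_mod_cast hm.le
  refine squeeze_zero_norm' ?_
    (tendsto_pow_atTop_nhds_zero_of_lt_one r.coe_nonneg (by exact_mod_cast hr1))
  filter_upwards [hpow] with m hm
  exact_mod_cast hm

theorem Matrix.tendsto_pow_atTop_nhds_zero_of_forall_spectrum_norm_lt_one {ι : Type*}
    [Fintype ι] [DecidableEq ι] {A : Matrix ι ι ℝ}
    (hA : ∀ μ ∈ spectrum ℂ (A.map Complex.ofReal), ‖μ‖ < 1) :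
    Tendsto (A ^ ·) atTop (𝓝 0) := by
  have hmap (m : ℕ) : (A.map Complex.ofReal ^ m).map Complex.re = A ^ m := by
    rw [← show (A ^ m).map Complex.ofReal = A.map Complex.ofReal ^ m from
      Matrix.map_pow A Complex.ofRealHom m, Matrix.map_map]
    ext; simp
  -- Any submultiplicative norm does: the ℓ∞-operator norm induces the product topology.
  let : NormedRing (Matrix ι ι ℂ) := Matrix.linftyOpNormedRing
  let : NormedAlgebra ℂ (Matrix ι ι ℂ) := Matrix.linftyOpNormedAlgebra
  have hρ : spectralRadius ℂ (A.map Complex.ofReal) < 1 := by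
    rcases (spectrum ℂ (A.map Complex.ofReal)).eq_empty_or_nonempty with h | h
    · simp [spectralRadius, h]
    · simpa using spectrum.spectralRadius_lt_of_forall_lt_of_nonempty h (r := 1)
        fun μ hμ => by exact_mod_cast hA μ hμ
  have hre := ((continuous_id.matrix_map Complex.continuous_re).tendsto 0).comp
    (tendsto_pow_atTop_nhds_zero_of_spectralRadius_lt_one hρ)
  simpa [Function.comp_def, hmap] using hre

theorem Matrix.mulVec_le_mulVec_of_nonneg {m n R : Type*} [Fintype n] [Semiring R]
    [PartialOrder R] [IsOrderedRing R] {A : Matrix m n R} (hA : ∀ i j, 0 ≤ A i j)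
    {v w : n → R} (h : v ≤ w) :
    A *ᵥ v ≤ A *ᵥ w :=
  fun i => dotProduct_le_dotProduct_of_nonneg_left h (hA i)

section Subsolution

variable {ι R : Type*} [Fintype ι] [DecidableEq ι] [Semiring R] [PartialOrder R] [IsOrderedRing R]
  {A : Matrix ι ι R} {q : ι → R}

theorem Matrix.pow_mulVec_le_of_mulVec_le (hA : ∀ i j, 0 ≤ A i j) (hq : A *ᵥ q ≤ q) (m : ℕ) :
    A ^ m *ᵥ q ≤ q := by
  induction m with
  | zero => simp
  | succ m ih =>
    calc A ^ (m + 1) *ᵥ q = A *ᵥ (A ^ m *ᵥ q) := by rw [pow_succ', mulVec_mulVec]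
      _ ≤ A *ᵥ q := mulVec_le_mulVec_of_nonneg hA ih
      _ ≤ q := hq

theorem Matrix.nonneg_of_mulVec_le_of_tendsto_pow [TopologicalSpace R] [IsTopologicalSemiring R]
    [OrderClosedTopology R] (hA : ∀ i j, 0 ≤ A i j) (hpow : Tendsto (A ^ ·) atTop (𝓝 0))
    (hq : A *ᵥ q ≤ q) : 0 ≤ q := by
  have hlim : Tendsto (fun m => A ^ m *ᵥ q) atTop (𝓝 0) := by
    simpa [Function.comp_def] using
      ((continuous_id.matrix_mulVec continuous_const).tendsto 0).comp hpow
  exact le_of_tendsto' hlim (pow_mulVec_le_of_mulVec_le hA hq)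

end Subsolution

theorem stmt_6_general (k : ℕ) (d d' : Fin k → ℝ) (hd' : ∀ i, 0 < d' i)
    (hdd' : ∀ i, d i ≤ d' i)
    (G : Matrix (Fin k) (Fin k) ℝ) (hG : ∀ i j, 0 ≤ G i j)
    (n : ℝ) (hn : 0 < n)
    (hρ : ∀ μ : ℂ, μ ∈ spectrum ℂ ((Matrix.diagonal d' * G).map (Complex.ofReal)) →
      ‖μ‖ < 1)
    (p p' : Fin k → ℝ) (hp : ∀ i, 0 ≤ p i)
    (heq : p = (Matrix.diagonal d * G).mulVec p + n • (Matrix.diagonal d).mulVec 1)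
    (heq' : p' = (Matrix.diagonal d' * G).mulVec p' + n • (Matrix.diagonal d').mulVec 1) :
    ∀ i, p i ≤ p' i := by
  have hA : ∀ i j, 0 ≤ (diagonal d' * G) i j := fun i j => by
    simpa using mul_nonneg (hd' i).le (hG i j)
  have hsub : (diagonal d' * G) *ᵥ (p' - p) ≤ p' - p := fun i => by
    have hi := congrFun heq i
    have hi' := congrFun heq' i
    simp only [← mulVec_mulVec, mulVec_sub, Pi.add_apply, Pi.sub_apply, Pi.smul_apply,
      mulVec_diagonal, Pi.one_apply, smul_eq_mul, mul_one] at hi hi' ⊢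
    have hGp : 0 ≤ (G *ᵥ p) i := dotProduct_nonneg_of_nonneg (hG i) hp
    linarith [mul_nonneg (sub_nonneg.2 (hdd' i)) (add_nonneg hGp hn.le)]
  intro i
  exact sub_nonneg.mp (nonneg_of_mulVec_le_of_tendsto_pow hA
    (tendsto_pow_atTop_nhds_zero_of_forall_spectrum_norm_lt_one hρ) hsub i)

/-- Monotonicity in the SIR targets: if `p = DGp + nD𝟙` and `p' = D'Gp' + nD'𝟙` have
nonnegative solutions with `D' ≥ D` entrywise (positive diagonal matrices) and the spectral
radius of `D'·G` is `< 1`, then `p' ≥ p` entrywise. -/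
theorem stmt_6 (k : ℕ) (d d' : Fin k → ℝ) (hd : ∀ i, 0 < d i) (hd' : ∀ i, 0 < d' i)
    (hdd' : ∀ i, d i ≤ d' i)
    (G : Matrix (Fin k) (Fin k) ℝ) (hG : ∀ i j, 0 ≤ G i j) (hGd : ∀ i, G i i = 0)
    (n : ℝ) (hn : 0 < n)
    (hρ : ∀ μ : ℂ, μ ∈ spectrum ℂ ((Matrix.diagonal d' * G).map (Complex.ofReal)) →
      ‖μ‖ < 1)
    (p p' : Fin k → ℝ) (hp : ∀ i, 0 ≤ p i) (hp' : ∀ i, 0 ≤ p' i)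
    (heq : p = (Matrix.diagonal d * G).mulVec p + n • (Matrix.diagonal d).mulVec 1)
    (heq' : p' = (Matrix.diagonal d' * G).mulVec p' + n • (Matrix.diagonal d').mulVec 1) :
    ∀ i, p i ≤ p' i :=
  stmt_6_general k d d' hd' hdd' G hG n hn hρ p p' hp heq heq'
end

section
/- Adding a user to a subcarrier cannot decrease the powers of the existing users: let p ∈ ℝ^k be the solution of the power-control system for users S, and p' ∈ ℝ^{k+1} the solution for S ∪ {u} (same D entries and G sub-matrix for the original users, spectral radius of the enlarged D·G matrix < 1). Then p'_i ≥ p_i for every original user i ∈ S. -/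
open Matrix Filter Topology

/-!
Padding the old powers with a zero power for the new user gives a subsolution
`p₀ ≤ M p₀ + c` of the enlarged system `p' = M p' + c`, where `M = D' G'` and `c = D' (n 𝟙)`.
As `M ≥ 0` has spectral radius below one, `M ^ N → 0` by Gelfand's formula, so any `x` with
`M x ≤ x` is nonnegative: `x ≥ M ^ N x → 0`. Taking `x = p' - p₀` gives `p₀ ≤ p'`.
-/

theorem tendsto_pow_atTop_nhds_zero_of_forall_mem_spectrum_norm_lt_one {A : Type*}
    [NormedRing A] [NormedAlgebra ℂ A] [CompleteSpace A] {a : A}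
    (h : ∀ z ∈ spectrum ℂ a, ‖z‖ < 1) : Tendsto (a ^ ·) atTop (𝓝 0) := by
  rcases subsingleton_or_nontrivial A with hA | hA
  · simpa only [Subsingleton.elim _ (0 : A)] using tendsto_const_nhds
  obtain ⟨z, hz, hzρ⟩ := spectrum.exists_nnnorm_eq_spectralRadius a
  obtain ⟨r, hzr, hr1⟩ := exists_between (show ‖z‖₊ < 1 by exact_mod_cast h z hz)
  have hρr : spectralRadius ℂ a < r := hzρ ▸ ENNReal.coe_lt_coe.mpr hzr
  have hbound : ∀ᶠ N : ℕ in atTop, ‖a ^ N‖ ≤ r ^ N := by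
    have hgelfand := spectrum.pow_nnnorm_pow_one_div_tendsto_nhds_spectralRadius a
    filter_upwards [eventually_gt_atTop 0, hgelfand.eventually_lt_const hρr] with N hN0 hN
    rw [one_div, ENNReal.rpow_inv_lt_iff (by positivity), ENNReal.rpow_natCast] at hN
    exact_mod_cast hN.le
  exact squeeze_zero_norm' hbound (tendsto_pow_atTop_nhds_zero_of_lt_one r.2 hr1)

namespace Matrix

variable {ι : Type*} [Fintype ι] {M : Matrix ι ι ℝ}

theorem mulVec_mono_of_nonneg (hM : ∀ i j, 0 ≤ M i j) : Monotone (M *ᵥ ·) := by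
  intro x y hxy i
  exact Finset.sum_le_sum fun j _ => mul_le_mul_of_nonneg_left (hxy j) (hM i j)

variable [DecidableEq ι]

theorem tendsto_pow_atTop_nhds_zero_of_forall_mem_spectrum_norm_lt_one
    (h : ∀ μ ∈ spectrum ℂ (M.map Complex.ofReal), ‖μ‖ < 1) : Tendsto (M ^ ·) atTop (𝓝 0) := by
  -- any algebra norm inducing the product topology would do
  let : NormedRing (Matrix ι ι ℂ) := Matrix.linftyOpNormedRing
  let : NormedAlgebra ℂ (Matrix ι ι ℂ) := Matrix.linftyOpNormedAlgebra
  have : CompleteSpace (Matrix ι ι ℂ) := FiniteDimensional.complete ℂ _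
  have hC := _root_.tendsto_pow_atTop_nhds_zero_of_forall_mem_spectrum_norm_lt_one h
  have hre : Continuous fun A : Matrix ι ι ℂ => A.map Complex.re :=
    continuous_id.matrix_map Complex.continuous_re
  convert (hre.tendsto 0).comp hC using 2 with N
  · rw [Function.comp_apply, show M.map Complex.ofReal = M.map Complex.ofRealHom from rfl,
      ← Matrix.map_pow, Matrix.map_map]
    ext; simp
  · simp

theorem nonneg_of_mulVec_le_self (hM : ∀ i j, 0 ≤ M i j)
    (hpow : Tendsto (M ^ ·) atTop (𝓝 0)) {x : ι → ℝ} (hx : M *ᵥ x ≤ x) : 0 ≤ x := by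
  have hle : ∀ N : ℕ, M ^ N *ᵥ x ≤ x := by
    intro N
    induction N with
    | zero => simp
    | succ N ih =>
      rw [pow_succ', ← mulVec_mulVec]
      exact (mulVec_mono_of_nonneg hM ih).trans hx
  have hlim : Tendsto (fun N : ℕ => M ^ N *ᵥ x) atTop (𝓝 0) := by
    simpa [Function.comp_def] using
      ((continuous_id.matrix_mulVec continuous_const).tendsto 0).comp hpow
  exact le_of_tendsto' hlim hle

theorem le_of_le_mulVec_add_of_eq_mulVec_add (hM : ∀ i j, 0 ≤ M i j)
    (hpow : Tendsto (M ^ ·) atTop (𝓝 0)) {c y z : ι → ℝ}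
    (hy : y ≤ M *ᵥ y + c) (hz : z = M *ᵥ z + c) : y ≤ z := by
  have hsplit : M *ᵥ (z - y) = z - y - (M *ᵥ y + c - y) := by
    rw [mulVec_sub]
    nth_rewrite 2 [hz]
    abel
  refine sub_nonneg.mp (nonneg_of_mulVec_le_self hM hpow ?_)
  rw [hsplit]
  exact sub_le_self _ (sub_nonneg.mpr hy)

theorem mulVec_snoc_zero_castSucc {R : Type*} [NonUnitalNonAssocSemiring R] {k : ℕ}
    {G : Matrix (Fin k) (Fin k) R} {G' : Matrix (Fin (k + 1)) (Fin (k + 1)) R}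
    (hG : ∀ i j : Fin k, G' i.castSucc j.castSucc = G i j) (p : Fin k → R) (i : Fin k) :
    (G' *ᵥ (Fin.snoc p 0 : Fin (k + 1) → R)) i.castSucc = (G *ᵥ p) i := by
  simp [mulVec, dotProduct, Fin.sum_univ_castSucc, hG]

end Matrix

theorem stmt_7_general (k : ℕ) (d : Fin k → ℝ)
    (G : Matrix (Fin k) (Fin k) ℝ)
    (d' : Fin (k + 1) → ℝ) (hd' : ∀ i, 0 < d' i)
    (hdext : ∀ i : Fin k, d' i.castSucc = d i)
    (G' : Matrix (Fin (k + 1)) (Fin (k + 1)) ℝ)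
    (hG' : ∀ i j, 0 ≤ G' i j)
    (hGext : ∀ i j : Fin k, G' i.castSucc j.castSucc = G i j)
    (n : ℝ) (hn : 0 < n)
    (hρ : ∀ μ : ℂ, μ ∈ spectrum ℂ ((Matrix.diagonal d' * G').map (Complex.ofReal)) →
      ‖μ‖ < 1)
    (p : Fin k → ℝ) (hp : ∀ i, 0 ≤ p i)
    (heq : p = (Matrix.diagonal d).mulVec (G.mulVec p + fun _ => n))
    (p' : Fin (k + 1) → ℝ)
    (heq' : p' = (Matrix.diagonal d').mulVec (G'.mulVec p' + fun _ => n)) :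
    ∀ i : Fin k, p i ≤ p' i.castSucc := by
  set M := diagonal d' * G'
  have hM : ∀ i j, 0 ≤ M i j := fun i j => by
    simpa [M, diagonal_mul] using mul_nonneg (hd' i).le (hG' i j)
  have hrhs : ∀ v, diagonal d' *ᵥ (G' *ᵥ v + fun _ => n) = M *ᵥ v + diagonal d' *ᵥ fun _ => n :=
    fun v => by rw [mulVec_add, mulVec_mulVec]
  set p₀ : Fin (k + 1) → ℝ := Fin.snoc p 0
  have hp₀ : 0 ≤ p₀ := Fin.lastCases (by simp [p₀]) fun i => by simpa [p₀] using hp i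
  have hsub : p₀ ≤ M *ᵥ p₀ + diagonal d' *ᵥ fun _ => n := by
    rw [← hrhs]
    refine Fin.lastCases ?_ fun i => ?_
    · have hGp₀ : 0 ≤ G' *ᵥ p₀ := by simpa using mulVec_mono_of_nonneg hG' hp₀
      simpa [p₀, mulVec_diagonal] using
        mul_nonneg (hd' _).le (add_nonneg (hGp₀ (Fin.last k)) hn.le)
    · simpa [p₀, mulVec_diagonal, mulVec_snoc_zero_castSucc hGext, hdext] using
        (congrFun heq i).le
  have hsol : p' = M *ᵥ p' + diagonal d' *ᵥ fun _ => n := by rw [← hrhs]; exact heq'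
  intro i
  have hle := le_of_le_mulVec_add_of_eq_mulVec_add hM
    (Matrix.tendsto_pow_atTop_nhds_zero_of_forall_mem_spectrum_norm_lt_one hρ) hsub hsol
  simpa only [p₀, Fin.snoc_castSucc] using hle i.castSucc

/-- Adding a user to a subcarrier cannot decrease the powers of the existing users. -/
theorem stmt_7 (k : ℕ) (d : Fin k → ℝ) (hd : ∀ i, 0 < d i)
    (G : Matrix (Fin k) (Fin k) ℝ) (hG : ∀ i j, 0 ≤ G i j) (hGd : ∀ i, G i i = 0)
    (d' : Fin (k + 1) → ℝ) (hd' : ∀ i, 0 < d' i)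
    (hdext : ∀ i : Fin k, d' i.castSucc = d i)
    (G' : Matrix (Fin (k + 1)) (Fin (k + 1)) ℝ)
    (hG' : ∀ i j, 0 ≤ G' i j) (hG'd : ∀ i, G' i i = 0)
    (hGext : ∀ i j : Fin k, G' i.castSucc j.castSucc = G i j)
    (n : ℝ) (hn : 0 < n)
    (hρ : ∀ μ : ℂ, μ ∈ spectrum ℂ ((Matrix.diagonal d' * G').map (Complex.ofReal)) →
      ‖μ‖ < 1)
    (p : Fin k → ℝ) (hp : ∀ i, 0 ≤ p i)
    (heq : p = (Matrix.diagonal d).mulVec (G.mulVec p + fun _ => n))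
    (p' : Fin (k + 1) → ℝ) (hp' : ∀ i, 0 ≤ p' i)
    (heq' : p' = (Matrix.diagonal d').mulVec (G'.mulVec p' + fun _ => n)) :
    ∀ i : Fin k, p i ≤ p' i.castSucc :=
  stmt_7_general k d G d' hd' hdext G' hG' hGext n hn hρ p hp heq p' heq'
end

section
/- Padding lemma for the reduction: an instance of P|M_j|C_max ≤ 2 with F₁ + 2F₂ < 2n is feasible if and only if the instance obtained by adding 2n − F₁ − 2F₂ new jobs of length 1, each eligible on all machines, is feasible. -/
/-!
A feasible schedule leaves `2 - load k` free units on machine `k`; since every job has length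
1 or 2, these add up to `2n - F₁ - 2F₂ = t`, so the `t` unit padding jobs, eligible everywhere,
can be sent exactly into the free slots. Conversely, removing the padding jobs only lowers loads.
-/

open Finset

section Load

variable {ι κ : Type*} [Fintype ι] [DecidableEq κ]

def load (a : ι → κ) (w : ι → ℕ) (k : κ) : ℕ :=
  ∑ j ∈ univ.filter (fun j => a j = k), w j

theorem sum_load [Fintype κ] (a : ι → κ) (w : ι → ℕ) : ∑ k, load a w k = ∑ j, w j :=
  sum_fiberwise univ a w

theorem load_one (a : ι → κ) (k : κ) : load a (fun _ => 1) k = #{j | a j = k} := by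
  simp [load]

theorem load_sum_elim {ι' : Type*} [Fintype ι'] (a : ι → κ) (b : ι' → κ)
    (w : ι → ℕ) (v : ι' → ℕ) (k : κ) :
    load (Sum.elim a b) (Sum.elim w v) k = load a w k + load b v k := by
  simp only [load, sum_filter, Fintype.sum_sum_type, Sum.elim_inl, Sum.elim_inr]
  rfl

end Load

theorem exists_fun_card_fiber_eq {κ : Type*} [Fintype κ] [DecidableEq κ] (s : κ → ℕ) {t : ℕ}
    (ht : ∑ k, s k = t) : ∃ b : Fin t → κ, ∀ k, #{i | b i = k} = s k := by
  have e : Fin t ≃ Σ k, Fin (s k) := Fintype.equivOfCardEq (by simp [ht])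
  refine ⟨fun i => (e i).1, fun k => ?_⟩
  calc #{i | (e i).1 = k} = #{p : Σ k, Fin (s k) | p.1 = k} :=
        card_equiv e (by simp)
    _ = s k := by
        rw [card_filter, Fintype.sum_sigma]
        simp [apply_ite card]

theorem sum_eq_card_add_two_mul_card {ι : Type*} [Fintype ι] (ℓ : ι → ℕ)
    (hl : ∀ j, ℓ j = 1 ∨ ℓ j = 2) :
    ∑ j, ℓ j = #{j | ℓ j = 1} + 2 * #{j | ℓ j = 2} := by
  have hsplit : ∀ j, ℓ j = (if ℓ j = 1 then 1 else 0) + 2 * (if ℓ j = 2 then 1 else 0) := by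
    intro j; rcases hl j with h | h <;> simp [h]
  rw [sum_congr rfl fun j _ => hsplit j, sum_add_distrib, ← mul_sum, card_filter, card_filter]

theorem stmt_13_general (n : ℕ) (J : Type) [Fintype J]
    (ℓ : J → ℕ) (hl : ∀ j, ℓ j = 1 ∨ ℓ j = 2)
    (M : J → Finset (Fin n)) (F₁ F₂ t : ℕ)
    (hF₁ : F₁ = (univ.filter (fun j => ℓ j = 1)).card)
    (hF₂ : F₂ = (univ.filter (fun j => ℓ j = 2)).card)
    (ht : t = 2 * n - F₁ - 2 * F₂) :
    (∃ a : J → Fin n, (∀ j, a j ∈ M j) ∧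
        ∀ k : Fin n, ∑ j ∈ univ.filter (fun j => a j = k), ℓ j ≤ 2) ↔
    (∃ a : J ⊕ Fin t → Fin n, (∀ j : J, a (Sum.inl j) ∈ M j) ∧
        ∀ k : Fin n, ∑ j ∈ univ.filter (fun j => a j = k),
          Sum.elim ℓ (fun _ => 1) j ≤ 2) := by
  constructor
  · rintro ⟨a, ha, hload⟩
    replace hload : ∀ k, load a ℓ k ≤ 2 := hload
    have hfree : ∑ k, (2 - load a ℓ k) = t := by
      rw [sum_tsub_distrib _ fun k _ => hload k, sum_load, sum_eq_card_add_two_mul_card ℓ hl]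
      simp [ht, hF₁, hF₂, Nat.sub_sub, mul_comm]
    obtain ⟨b, hb⟩ := exists_fun_card_fiber_eq _ hfree
    refine ⟨Sum.elim a b, ha, fun k => ?_⟩
    show load (Sum.elim a b) (Sum.elim ℓ fun _ => 1) k ≤ 2
    rw [load_sum_elim, load_one, hb, Nat.add_sub_cancel' (hload k)]
  · rintro ⟨a, ha, hload⟩
    refine ⟨a ∘ Sum.inl, ha, fun k => ?_⟩
    calc load (a ∘ Sum.inl) ℓ k
        ≤ load (a ∘ Sum.inl) ℓ k + load (a ∘ Sum.inr) (fun _ => 1) k := Nat.le_add_right _ _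
      _ = load a (Sum.elim ℓ fun _ => 1) k := by rw [← load_sum_elim, Sum.elim_comp_inl_inr]
      _ ≤ 2 := hload k

/-- Padding lemma: an instance of `P|M_j|C_max ≤ 2` with `F₁ + 2F₂ < 2n` is feasible iff
the instance padded with `2n - F₁ - 2F₂` new length-1 jobs, each eligible on all machines,
is feasible. -/
theorem stmt_13 (n : ℕ) (J : Type) [Fintype J] [DecidableEq J]
    (ℓ : J → ℕ) (hl : ∀ j, ℓ j = 1 ∨ ℓ j = 2)
    (M : J → Finset (Fin n)) (F₁ F₂ t : ℕ)
    (hF₁ : F₁ = (univ.filter (fun j => ℓ j = 1)).card)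
    (hF₂ : F₂ = (univ.filter (fun j => ℓ j = 2)).card)
    (hlt : F₁ + 2 * F₂ < 2 * n) (ht : t = 2 * n - F₁ - 2 * F₂) :
    (∃ a : J → Fin n, (∀ j, a j ∈ M j) ∧
        ∀ k : Fin n, ∑ j ∈ univ.filter (fun j => a j = k), ℓ j ≤ 2) ↔
    (∃ a : J ⊕ Fin t → Fin n, (∀ j : J, a (Sum.inl j) ∈ M j) ∧
        ∀ k : Fin n, ∑ j ∈ univ.filter (fun j => a j = k),
          Sum.elim ℓ (fun _ => 1) j ≤ 2) :=
  stmt_13_general n J ℓ hl M F₁ F₂ t hF₁ hF₂ ht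
end
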